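/- Almost sure vanishing of the centred process: in an extended Pólya urn satisfying (A1)–(A4), the centred transformed process satisfies n^{-1}(Y_n − E[Y_n]) → 0 almost surely as n → ∞, where Y_n := C_n U; consequently n^{-1} Y_n → s e_1 almost surely. -/

import Mathlib

open MeasureTheory ProbabilityTheory Filter Matrix
open scoped Topology NNReal

noncomputable section

/-- An extended Pólya urn process with `d` colours and replacement matrix `R`, adapted to the
filtration `F` on the probability space `(Ω, μ)`.  `C n` is the (row) vector of ball counts at
time `n`, `χ (n+1)` is the indicator (canonical basis) row vector of the colour drawn at time
`n+1`, the initial configuration `C 0 = C0` is deterministic with positive total mass, the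
dynamics are `C (n+1) = C n + χ (n+1) ⬝ R`, the conditional probability of drawing colour `i`
at time `n+1` given `F n` equals `C n i / t n` where `t n = ∑ i, C n i`, and the urn is
tenable: almost surely all coordinates stay nonnegative (assumption (A1)). -/
structure UrnProcess (d : ℕ) {Ω : Type*} [mΩ : MeasurableSpace Ω]
    (μ : Measure Ω) (F : Filtration ℕ mΩ) (R : Matrix (Fin d) (Fin d) ℝ) where
  C : ℕ → Ω → Fin d → ℝ
  χ : ℕ → Ω → Fin d → ℝ
  adapted : MeasureTheory.Adapted F C
  chi_meas : ∀ n : ℕ, StronglyMeasurable[F (n + 1)] (χ (n + 1))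
  C0 : Fin d → ℝ
  C0_det : ∀ ω, C 0 ω = C0
  t0_pos : 0 < ∑ i, C0 i
  dynamics : ∀ n ω, C (n + 1) ω = C n ω + Matrix.vecMul (χ (n + 1) ω) R
  chi_basis : ∀ n ω, ∃ i : Fin d, χ (n + 1) ω = Pi.single i 1
  chi_cond : ∀ (n : ℕ) (i : Fin d),
    μ[Set.indicator {ω | χ (n + 1) ω = Pi.single i 1} (fun _ => (1 : ℝ)) | F n]
      =ᵐ[μ] fun ω => C n ω i / ∑ j, C n ω j
  tenable : ∀ᵐ ω ∂μ, ∀ n i, 0 ≤ C n ω i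

/-- The spectral assumptions (A2)–(A4) on the replacement matrix `R`: `R` is diagonalisable
over ℝ by an invertible matrix `U` (with inverse `V`) as `V * R * U = diagonal lam` with
real eigenvalues `lam 0 ≥ lam 1 ≥ …`; the principal eigenvalue `s = lam 0` is positive and
`s > 2 λ` for every other eigenvalue λ (A2, "small"); the first column of `U` is the all-ones
vector `e⊤` (so `R e⊤ = s e⊤`), and the first row `v₁` of `V = U⁻¹` — the principal left
eigenvector — is a stochastic vector (A3, "strictly balanced"). -/
structure UrnSpectral (d : ℕ) [NeZero d] (R : Matrix (Fin d) (Fin d) ℝ) where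
  U : Matrix (Fin d) (Fin d) ℝ
  V : Matrix (Fin d) (Fin d) ℝ
  UV : U * V = 1
  VU : V * U = 1
  lam : Fin d → ℝ
  diag : R * U = U * Matrix.diagonal lam
  lam_anti : Antitone lam
  s_pos : 0 < lam 0
  small : ∀ j : Fin d, j ≠ 0 → 2 * lam j < lam 0
  U_col_one : ∀ i : Fin d, U i 0 = 1
  v1_nonneg : ∀ i : Fin d, 0 ≤ V 0 i
  v1_sum : ∑ i, V 0 i = 1

/-!
Write `Y_n = C_n U` and `t_n = t_0 + n s`. Every row of `R` sums to `s`, so the total mass of the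
urn is the deterministic `t_n`, and it is the principal coordinate `Y_{n,0}`. For `j ≠ 0`,
`Y_{n+1,j} = Y_{n,j} + λ_j (χ_{n+1} U)_j` with `E[(χ_{n+1} U)_j | F_n] = Y_{n,j} / t_n`, hence
`E[Y_{n+1,j}²] ≤ (1 + 2 λ_j / t_n) E[Y_{n,j}²] + O(1)`, and `2 λ_j < s` forces
`E[Y_{n,j}²] = O(n)`. Chebyshev and Borel–Cantelli along the squares, with bounded increments in
between, give `Y_{n,j} / n → 0` almost surely, and dominated convergence gives
`E[Y_{n,j}] / n → 0`.
-/

open scoped ENNReal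

lemma abs_sub_le_mul_of_abs_sub_succ_le {x : ℕ → ℝ} {K : ℝ}
    (hx : ∀ n, |x (n + 1) - x n| ≤ K) {m n : ℕ} (hmn : m ≤ n) :
    |x n - x m| ≤ K * (n - m : ℕ) := by
  induction n, hmn using Nat.le_induction with
  | base => simp
  | succ n hmn ih =>
    calc |x (n + 1) - x m| ≤ |x (n + 1) - x n| + |x n - x m| := abs_sub_le _ _ _
      _ ≤ K + K * (n - m : ℕ) := add_le_add (hx n) ih
      _ = K * (n + 1 - m : ℕ) := by rw [Nat.succ_sub hmn]; push_cast; ring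

lemma Nat.tendsto_sqrt_atTop : Tendsto Nat.sqrt atTop atTop :=
  tendsto_atTop_atTop.2 fun b => ⟨b ^ 2, fun _ hm => Nat.le_sqrt'.2 hm⟩

/-- Between consecutive squares the gap `m - ⌊√m⌋² ≤ 2⌊√m⌋` is negligible against `m`. -/
lemma tendsto_div_natCast_of_tendsto_sq {x : ℕ → ℝ} {K : ℝ}
    (hx : ∀ n, |x (n + 1) - x n| ≤ K)
    (hsq : Tendsto (fun n : ℕ => x (n ^ 2) / (n ^ 2 : ℕ)) atTop (𝓝 0)) :
    Tendsto (fun n : ℕ => x n / n) atTop (𝓝 0) := by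
  have hK : 0 ≤ K := (abs_nonneg _).trans (hx 0)
  have hbound : Tendsto (fun m : ℕ => |x (m.sqrt ^ 2) / (m.sqrt ^ 2 : ℕ)| + 2 * K / m.sqrt)
      atTop (𝓝 0) := by
    have := (hsq.abs.add ((tendsto_const_nhds (x := 2 * K)).div_atTop
      tendsto_natCast_atTop_atTop)).comp Nat.tendsto_sqrt_atTop
    rwa [abs_zero, add_zero] at this
  refine squeeze_zero_norm' ?_ hbound
  filter_upwards [eventually_ge_atTop 1] with m hm
  set r := m.sqrt
  have hr : (0 : ℝ) < r := by exact_mod_cast Nat.sqrt_pos.2 hm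
  have hrm : r ^ 2 ≤ m := Nat.sqrt_le' m
  have hgap : m - r ^ 2 ≤ 2 * r := by
    have : m < (r + 1) ^ 2 := Nat.lt_succ_sqrt' m
    have : (r + 1) ^ 2 = r ^ 2 + 2 * r + 1 := by ring
    omega
  have hxm : |x m| ≤ |x (r ^ 2)| + 2 * K * r := by
    have hstep := abs_sub_le_mul_of_abs_sub_succ_le hx hrm
    have : K * (m - r ^ 2 : ℕ) ≤ K * (2 * r) :=
      mul_le_mul_of_nonneg_left (by exact_mod_cast hgap) hK
    linarith [abs_sub_abs_le_abs_sub (x m) (x (r ^ 2))]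
  rw [Real.norm_eq_abs, abs_div, Nat.abs_cast, abs_div, Nat.abs_cast]
  calc |x m| / m ≤ (|x (r ^ 2)| + 2 * K * r) / (r ^ 2 : ℕ) := by gcongr
    _ = |x (r ^ 2)| / (r ^ 2 : ℕ) + 2 * K / r := by
        push_cast
        field_simp

/-- Once `B (1 - θ) ≥ K`, the linear bound `B (n + 1)` is preserved by the recursion. -/
lemma exists_le_mul_succ_of_le_one_add_div {v : ℕ → ℝ} {θ K : ℝ} (hθ₀ : 0 ≤ θ)
    (hθ₁ : θ < 1)
    (hv : ∀ᶠ n : ℕ in atTop, v (n + 1) ≤ (1 + θ / (n + 1)) * v n + K) :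
    ∃ B : ℝ, ∀ n : ℕ, v n ≤ B * (n + 1) := by
  obtain ⟨n₀, hn₀⟩ := eventually_atTop.1 hv
  set S := ∑ k ∈ Finset.range (n₀ + 1), |v k|
  set B := |K| / (1 - θ) + S
  have h1θ : 0 < 1 - θ := by linarith
  have hS : 0 ≤ S := by positivity
  have hSB : S ≤ B := le_add_of_nonneg_left (div_nonneg (abs_nonneg K) h1θ.le)
  have hKB : K ≤ B * (1 - θ) := by
    rw [add_mul, div_mul_cancel₀ _ h1θ.ne']
    nlinarith [le_abs_self K, mul_nonneg hS h1θ.le]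
  have hinit : ∀ n ≤ n₀, v n ≤ B * (n + 1) := by
    intro n hn
    have hvS : v n ≤ S := (le_abs_self _).trans
      (Finset.single_le_sum (fun k _ => abs_nonneg (v k)) (Finset.mem_range.2 (by omega)))
    nlinarith [mul_nonneg (hS.trans hSB) n.cast_nonneg]
  refine ⟨B, fun n => ?_⟩
  induction n with
  | zero => exact hinit 0 (Nat.zero_le _)
  | succ n ih =>
    rcases le_or_gt (n + 1) n₀ with hn | hn
    · exact hinit _ hn
    have hpos : (0 : ℝ) < n + 1 := by positivity
    calc v (n + 1) ≤ (1 + θ / (n + 1)) * v n + K := hn₀ n (by omega)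
      _ ≤ (1 + θ / (n + 1)) * (B * (n + 1)) + K := by gcongr
      _ = B * (n + 1) + B * θ + K := by field_simp
      _ ≤ B * ((n + 1 : ℕ) + 1) := by push_cast; linarith

section SecondMoment

variable {Ω : Type*} [MeasurableSpace Ω] {μ : Measure Ω} [IsFiniteMeasure μ]
  {X : ℕ → Ω → ℝ} {B : ℝ}

/-- Chebyshev along the squares `n²`, where the bound `B (n² + 1) / (ε n²)²` is summable,
followed by Borel–Cantelli. -/
lemma ae_eventually_abs_lt_of_integral_sq_le (hX : ∀ n, Integrable (fun ω => X n ω ^ 2) μ)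
    (hB : ∀ n : ℕ, ∫ ω, X n ω ^ 2 ∂μ ≤ B * (n + 1)) {ε : ℝ} (hε : 0 < ε) :
    ∀ᵐ ω ∂μ, ∀ᶠ n : ℕ in atTop, |X (n ^ 2) ω| < ε * (n ^ 2 : ℕ) := by
  set s : ℕ → Set Ω := fun n => {ω | (ε * (n ^ 2 : ℕ)) ^ 2 ≤ X (n ^ 2) ω ^ 2}
  have hB0 : 0 ≤ B := by
    have h := hB 0
    rw [Nat.cast_zero, zero_add, mul_one] at h
    exact (integral_nonneg fun ω => sq_nonneg (X 0 ω)).trans h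
  have hmeas : ∀ n ≥ 1, μ.real (s n) ≤ 2 * B / ε ^ 2 * (1 / (n : ℝ) ^ 2) := by
    intro n hn
    have hmarkov : (ε * (n ^ 2 : ℕ)) ^ 2 * μ.real (s n) ≤ _ :=
      mul_meas_ge_le_integral_of_nonneg (ae_of_all μ fun ω => sq_nonneg (X (n ^ 2) ω))
        (hX (n ^ 2)) _
    have hn1 : (1 : ℝ) ≤ n := by exact_mod_cast hn
    have hBn := hB (n ^ 2)
    push_cast at hmarkov hBn ⊢
    rw [div_mul_div_comm, le_div_iff₀ (by positivity)]
    have hn2 : (1 : ℝ) ≤ n ^ 2 := by nlinarith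
    nlinarith [measureReal_nonneg (μ := μ) (s := s n), mul_le_mul_of_nonneg_left hn2 hB0]
  have hsum : Summable fun n => μ.real (s n) :=
    Summable.of_norm_bounded_eventually_nat
      ((Real.summable_one_div_nat_pow.2 one_lt_two).mul_left (2 * B / ε ^ 2))
      (by filter_upwards [eventually_ge_atTop 1] with n hn
          rw [Real.norm_of_nonneg measureReal_nonneg]
          exact hmeas n hn)
  have hfin : ∑' n, μ (s n) ≠ ∞ := by
    simpa only [ofReal_measureReal (measure_ne_top μ _)] using hsum.tsum_ofReal_ne_top
  filter_upwards [ae_eventually_notMem hfin] with ω hω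
  filter_upwards [hω] with n hn
  simp only [s, Set.mem_ofPred_eq, not_le] at hn
  exact abs_lt_of_sq_lt_sq hn (by positivity)

lemma ae_tendsto_sq_div_of_integral_sq_le (hX : ∀ n, Integrable (fun ω => X n ω ^ 2) μ)
    (hB : ∀ n : ℕ, ∫ ω, X n ω ^ 2 ∂μ ≤ B * (n + 1)) :
    ∀ᵐ ω ∂μ, Tendsto (fun n : ℕ => X (n ^ 2) ω / (n ^ 2 : ℕ)) atTop (𝓝 0) := by
  have hall := ae_all_iff.2 fun k : ℕ =>
    ae_eventually_abs_lt_of_integral_sq_le hX hB (Nat.one_div_pos_of_nat (n := k))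
  filter_upwards [hall] with ω hω
  rw [Metric.tendsto_atTop]
  intro ε hε
  obtain ⟨k, hk⟩ := exists_nat_one_div_lt hε
  obtain ⟨N, hN⟩ := eventually_atTop.1 ((hω k).and (eventually_ge_atTop 1))
  refine ⟨N, fun n hn => ?_⟩
  obtain ⟨hlt, hn1⟩ := hN n hn
  have hpos : (0 : ℝ) < (n ^ 2 : ℕ) := by positivity
  rw [Real.dist_eq, sub_zero, abs_div, Nat.abs_cast, div_lt_iff₀ hpos]
  nlinarith

lemma ae_tendsto_div_natCast_of_integral_sq_le {K : ℝ}
    (hX : ∀ n, Integrable (fun ω => X n ω ^ 2) μ)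
    (hB : ∀ n : ℕ, ∫ ω, X n ω ^ 2 ∂μ ≤ B * (n + 1))
    (hinc : ∀ n ω, |X (n + 1) ω - X n ω| ≤ K) :
    ∀ᵐ ω ∂μ, Tendsto (fun n : ℕ => X n ω / n) atTop (𝓝 0) := by
  filter_upwards [ae_tendsto_sq_div_of_integral_sq_le hX hB] with ω hω
  exact tendsto_div_natCast_of_tendsto_sq (fun n => hinc n ω) hω

end SecondMoment

namespace UrnSpectral

variable {d : ℕ} [NeZero d] {R : Matrix (Fin d) (Fin d) ℝ} (spec : UrnSpectral d R)

lemma sum_row_eq (i : Fin d) : ∑ k, R i k = spec.lam 0 := by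
  simpa [Matrix.mul_apply, spec.U_col_one, Matrix.diagonal_apply] using
    congrFun (congrFun spec.diag i) 0

lemma vecMul_vecMul_U (v : Fin d → ℝ) (j : Fin d) :
    vecMul (vecMul v R) spec.U j = spec.lam j * vecMul v spec.U j := by
  rw [vecMul_vecMul, spec.diag, ← vecMul_vecMul, vecMul_diagonal, mul_comm]

end UrnSpectral

namespace UrnProcess

variable {d : ℕ} {Ω : Type*} [mΩ : MeasurableSpace Ω] {μ : Measure Ω}
  {F : Filtration ℕ mΩ} {R : Matrix (Fin d) (Fin d) ℝ} (urn : UrnProcess d μ F R)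

lemma chi_apply_eq_indicator (n : ℕ) (i : Fin d) (ω : Ω) :
    urn.χ (n + 1) ω i = {ω | urn.χ (n + 1) ω = Pi.single i 1}.indicator (fun _ => 1) ω := by
  obtain ⟨i₀, h⟩ := urn.chi_basis n ω
  by_cases hi : i = i₀
  · simp [h, hi]
  · have : (Pi.single i₀ 1 : Fin d → ℝ) ≠ Pi.single i 1 := fun h' => by
      simpa [Pi.single_apply, hi] using congrFun h' i
    simp [h, this, hi]

lemma abs_vecMul_chi_le (U : Matrix (Fin d) (Fin d) ℝ) (n : ℕ) (j : Fin d) (ω : Ω) :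
    |vecMul (urn.χ (n + 1) ω) U j| ≤ ∑ i, |U i j| := by
  obtain ⟨i₀, h⟩ := urn.chi_basis n ω
  rw [h, single_one_vecMul]
  exact Finset.single_le_sum (f := fun i => |U i j|) (fun i _ => abs_nonneg _)
    (Finset.mem_univ i₀)

lemma sum_C_eq {s : ℝ} (hR : ∀ i, ∑ k, R i k = s) (n : ℕ) (ω : Ω) :
    ∑ i, urn.C n ω i = (∑ i, urn.C0 i) + n * s := by
  induction n with
  | zero => simp [urn.C0_det]
  | succ n ih =>
    obtain ⟨i₀, h⟩ := urn.chi_basis n ω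
    simp only [urn.dynamics, h, single_one_vecMul, Pi.add_apply, Finset.sum_add_distrib, ih,
      Matrix.row_apply, hR]
    push_cast
    ring

lemma vecMul_C_succ [NeZero d] (spec : UrnSpectral d R) (n : ℕ) (j : Fin d) (ω : Ω) :
    vecMul (urn.C (n + 1) ω) spec.U j
      = vecMul (urn.C n ω) spec.U j + spec.lam j * vecMul (urn.χ (n + 1) ω) spec.U j := by
  rw [urn.dynamics, add_vecMul, Pi.add_apply, spec.vecMul_vecMul_U]

lemma stronglyMeasurable_vecMul_C (U : Matrix (Fin d) (Fin d) ℝ) (n : ℕ) (j : Fin d) :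
    StronglyMeasurable[F n] fun ω => vecMul (urn.C n ω) U j :=
  ((continuous_apply j).comp (continuous_id.matrix_vecMul continuous_const)).comp_stronglyMeasurable
    (urn.adapted n).stronglyMeasurable

lemma stronglyMeasurable_vecMul_chi (U : Matrix (Fin d) (Fin d) ℝ) (n : ℕ) (j : Fin d) :
    StronglyMeasurable[F (n + 1)] fun ω => vecMul (urn.χ (n + 1) ω) U j :=
  ((continuous_apply j).comp (continuous_id.matrix_vecMul continuous_const)).comp_stronglyMeasurable
    (urn.chi_meas n)

section Conditional

variable [IsFiniteMeasure μ]

lemma integrable_chi_apply (n : ℕ) (i : Fin d) :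
    Integrable (fun ω => urn.χ (n + 1) ω i) μ := by
  simp_rw [urn.chi_apply_eq_indicator n i]
  exact (integrable_const 1).indicator
    (((urn.chi_meas n).mono (F.le _)).measurable (measurableSet_singleton _))

lemma integrable_vecMul_chi (U : Matrix (Fin d) (Fin d) ℝ) (n : ℕ) (j : Fin d) :
    Integrable (fun ω => vecMul (urn.χ (n + 1) ω) U j) μ :=
  .of_bound ((urn.stronglyMeasurable_vecMul_chi U n j).mono (F.le _)).aestronglyMeasurable _
    (ae_of_all μ (urn.abs_vecMul_chi_le U n j))

lemma condExp_vecMul_chi (U : Matrix (Fin d) (Fin d) ℝ) (n : ℕ) (j : Fin d) :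
    μ[fun ω => vecMul (urn.χ (n + 1) ω) U j | F n]
      =ᵐ[μ] fun ω => vecMul (urn.C n ω) U j / ∑ k, urn.C n ω k := by
  have hχ : ∀ i, μ[fun ω => urn.χ (n + 1) ω i | F n]
      =ᵐ[μ] fun ω => urn.C n ω i / ∑ k, urn.C n ω k := by
    intro i
    simp_rw [urn.chi_apply_eq_indicator n i]
    exact urn.chi_cond n i
  have hsum : (fun ω => vecMul (urn.χ (n + 1) ω) U j)
      = ∑ i, U i j • fun ω => urn.χ (n + 1) ω i := by
    ext ω
    simp [vecMul, dotProduct, mul_comm]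
  rw [hsum]
  refine (condExp_finsetSum (fun i _ => (urn.integrable_chi_apply n i).smul (U i j)) _).trans ?_
  filter_upwards [ae_all_iff.2 fun i => (condExp_smul (U i j) _ (F n)).trans ((hχ i).const_smul _)]
    with ω hω
  simp [hω, vecMul, dotProduct, Finset.sum_div, mul_div_assoc, mul_comm]

lemma integral_mul_vecMul_chi (U : Matrix (Fin d) (Fin d) ℝ) (n : ℕ) (j : Fin d)
    {g : Ω → ℝ} (hg : StronglyMeasurable[F n] g)
    (hgχ : Integrable (fun ω => g ω * vecMul (urn.χ (n + 1) ω) U j) μ) :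
    ∫ ω, g ω * vecMul (urn.χ (n + 1) ω) U j ∂μ
      = ∫ ω, g ω * (vecMul (urn.C n ω) U j / ∑ k, urn.C n ω k) ∂μ := by
  rw [← integral_condExp (F.le n)]
  refine integral_congr_ae ?_
  filter_upwards [condExp_mul_of_stronglyMeasurable_left hg hgχ (urn.integrable_vecMul_chi U n j),
    urn.condExp_vecMul_chi U n j] with ω h₁ h₂
  exact h₁.trans (by rw [Pi.mul_apply, h₂])

end Conditional

section Spectral

variable [NeZero d] (spec : UrnSpectral d R)

lemma vecMul_C_apply_zero (n : ℕ) (ω : Ω) :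
    vecMul (urn.C n ω) spec.U 0 = (∑ i, urn.C0 i) + n * spec.lam 0 := by
  simp [vecMul, dotProduct, spec.U_col_one, urn.sum_C_eq spec.sum_row_eq]

lemma abs_vecMul_C_succ_sub_le (n : ℕ) (j : Fin d) (ω : Ω) :
    |vecMul (urn.C (n + 1) ω) spec.U j - vecMul (urn.C n ω) spec.U j|
      ≤ |spec.lam j| * ∑ i, |spec.U i j| := by
  rw [urn.vecMul_C_succ spec, add_sub_cancel_left, abs_mul]
  exact mul_le_mul_of_nonneg_left (urn.abs_vecMul_chi_le _ n j ω) (abs_nonneg _)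

lemma abs_vecMul_C_le (n : ℕ) (j : Fin d) (ω : Ω) :
    |vecMul (urn.C n ω) spec.U j|
      ≤ |vecMul urn.C0 spec.U j| + |spec.lam j| * (∑ i, |spec.U i j|) * n := by
  have h := abs_sub_le_mul_of_abs_sub_succ_le (x := fun n => vecMul (urn.C n ω) spec.U j)
    (fun n => urn.abs_vecMul_C_succ_sub_le spec n j ω) (Nat.zero_le n)
  simp only [urn.C0_det, Nat.sub_zero] at h
  linarith [abs_sub_abs_le_abs_sub (vecMul (urn.C n ω) spec.U j) (vecMul urn.C0 spec.U j)]

lemma integrable_vecMul_C_mul (n : ℕ) (j : Fin d) {g : Ω → ℝ} (hg : Integrable g μ) :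
    Integrable (fun ω => vecMul (urn.C n ω) spec.U j * g ω) μ :=
  hg.bdd_mul ((urn.stronglyMeasurable_vecMul_C _ n j).mono (F.le n)).aestronglyMeasurable
    (ae_of_all μ (urn.abs_vecMul_C_le spec n j))

lemma integrable_vecMul_C [IsFiniteMeasure μ] (n : ℕ) (j : Fin d) :
    Integrable (fun ω => vecMul (urn.C n ω) spec.U j) μ := by
  simpa using urn.integrable_vecMul_C_mul spec n j (integrable_const (1 : ℝ))

lemma integrable_sq_vecMul_C [IsFiniteMeasure μ] (n : ℕ) (j : Fin d) :
    Integrable (fun ω => vecMul (urn.C n ω) spec.U j ^ 2) μ := by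
  simpa only [sq] using urn.integrable_vecMul_C_mul spec n j (urn.integrable_vecMul_C spec n j)

/-- Squaring `Y_{n+1} = Y_n + λ_j χ_{n+1} U e_j`: the cross term has mean `E[Y_n²] / t_n`
because `E[χ_{n+1} U e_j | F_n] = Y_n / t_n`. -/
lemma integral_sq_vecMul_C_succ_le [IsProbabilityMeasure μ] (n : ℕ) (j : Fin d) :
    ∫ ω, vecMul (urn.C (n + 1) ω) spec.U j ^ 2 ∂μ
      ≤ (1 + 2 * spec.lam j / ((∑ i, urn.C0 i) + n * spec.lam 0))
          * ∫ ω, vecMul (urn.C n ω) spec.U j ^ 2 ∂μ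
        + (spec.lam j * ∑ i, |spec.U i j|) ^ 2 := by
  set t := (∑ i, urn.C0 i) + n * spec.lam 0
  set Y := fun ω => vecMul (urn.C n ω) spec.U j
  set Z := fun ω => vecMul (urn.χ (n + 1) ω) spec.U j
  have hYZ : Integrable (fun ω => Y ω * Z ω) μ :=
    urn.integrable_vecMul_C_mul spec n j (urn.integrable_vecMul_chi _ n j)
  have hZ2 : Integrable (fun ω => Z ω ^ 2) μ := by
    simpa only [sq] using (urn.integrable_vecMul_chi spec.U n j).bdd_mul
      ((urn.stronglyMeasurable_vecMul_chi _ n j).mono (F.le _)).aestronglyMeasurable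
      (ae_of_all μ (urn.abs_vecMul_chi_le _ n j))
  have hcross : ∫ ω, Y ω * Z ω ∂μ = (∫ ω, Y ω ^ 2 ∂μ) / t := by
    rw [urn.integral_mul_vecMul_chi _ n j (urn.stronglyMeasurable_vecMul_C _ n j) hYZ,
      ← integral_div]
    simp only [urn.sum_C_eq spec.sum_row_eq, Y, t, sq, mul_div_assoc]
  have hZ2_le : ∫ ω, Z ω ^ 2 ∂μ ≤ (∑ i, |spec.U i j|) ^ 2 := by
    refine (integral_mono hZ2 (integrable_const ((∑ i, |spec.U i j|) ^ 2)) fun ω => ?_).trans_eq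
      (by simp)
    exact sq_le_sq' (abs_le.1 (urn.abs_vecMul_chi_le _ n j ω)).1
      (abs_le.1 (urn.abs_vecMul_chi_le _ n j ω)).2
  have hsplit : ∫ ω, vecMul (urn.C (n + 1) ω) spec.U j ^ 2 ∂μ
      = ∫ ω, Y ω ^ 2 ∂μ + 2 * spec.lam j * ∫ ω, Y ω * Z ω ∂μ
        + spec.lam j ^ 2 * ∫ ω, Z ω ^ 2 ∂μ := by
    have hY2 : Integrable (fun ω => Y ω ^ 2) μ := urn.integrable_sq_vecMul_C spec n j
    have hpt : (fun ω => vecMul (urn.C (n + 1) ω) spec.U j ^ 2)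
        = fun ω => Y ω ^ 2 + 2 * spec.lam j * (Y ω * Z ω) + spec.lam j ^ 2 * Z ω ^ 2 := by
      ext ω
      simp only [Y, Z, urn.vecMul_C_succ spec]
      ring
    have hsum : Integrable (fun ω => Y ω ^ 2 + 2 * spec.lam j * (Y ω * Z ω)) μ :=
      hY2.add (hYZ.const_mul _)
    rw [hpt, integral_add hsum (hZ2.const_mul _), integral_add hY2 (hYZ.const_mul _),
      integral_const_mul, integral_const_mul]
  calc ∫ ω, vecMul (urn.C (n + 1) ω) spec.U j ^ 2 ∂μ
      = ∫ ω, Y ω ^ 2 ∂μ + 2 * spec.lam j * ((∫ ω, Y ω ^ 2 ∂μ) / t)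
        + spec.lam j ^ 2 * ∫ ω, Z ω ^ 2 ∂μ := by rw [hsplit, hcross]
    _ ≤ ∫ ω, Y ω ^ 2 ∂μ + 2 * spec.lam j * ((∫ ω, Y ω ^ 2 ∂μ) / t)
        + spec.lam j ^ 2 * (∑ i, |spec.U i j|) ^ 2 := by gcongr
    _ = (1 + 2 * spec.lam j / t) * ∫ ω, Y ω ^ 2 ∂μ
        + (spec.lam j * ∑ i, |spec.U i j|) ^ 2 := by ring

/-- Smallness `2 λ_j < s` leaves room for a `θ < 1` with `2 λ_j / t_n ≤ θ / (n + 1)` for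
large `n`. -/
lemma exists_integral_sq_vecMul_C_le [IsProbabilityMeasure μ] {j : Fin d} (hj : j ≠ 0) :
    ∃ B : ℝ, ∀ n : ℕ, ∫ ω, vecMul (urn.C n ω) spec.U j ^ 2 ∂μ ≤ B * (n + 1) := by
  set s := spec.lam 0
  set t₀ := ∑ i, urn.C0 i
  set θ := (max (2 * spec.lam j / s) 0 + 1) / 2 with hθ
  have hs : 0 < s := spec.s_pos
  have hsmall : 2 * spec.lam j / s < 1 := (div_lt_one hs).2 (spec.small j hj)
  have hθ₀ : 0 ≤ θ := by positivity
  have hθ₁ : θ < 1 := by linarith [max_lt hsmall one_pos]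
  have hθs : 2 * spec.lam j < θ * s := by
    have : 2 * spec.lam j / s < θ := by linarith [le_max_left (2 * spec.lam j / s) 0]
    exact (div_lt_iff₀ hs).1 this
  refine exists_le_mul_succ_of_le_one_add_div (K := (spec.lam j * ∑ i, |spec.U i j|) ^ 2)
    hθ₀ hθ₁ ?_
  filter_upwards [tendsto_natCast_atTop_atTop.eventually_ge_atTop
    ((2 * spec.lam j - θ * t₀) / (θ * s - 2 * spec.lam j))] with n hn
  rw [div_le_iff₀ (by linarith)] at hn
  have ht : 0 < t₀ + n * s := by have := urn.t0_pos; positivity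
  have hq : 2 * spec.lam j / (t₀ + n * s) ≤ θ / (n + 1) := by
    rw [div_le_div_iff₀ ht (by positivity)]
    nlinarith
  calc ∫ ω, vecMul (urn.C (n + 1) ω) spec.U j ^ 2 ∂μ
      ≤ (1 + 2 * spec.lam j / (t₀ + n * s)) * ∫ ω, vecMul (urn.C n ω) spec.U j ^ 2 ∂μ
        + (spec.lam j * ∑ i, |spec.U i j|) ^ 2 := urn.integral_sq_vecMul_C_succ_le spec n j
    _ ≤ (1 + θ / (n + 1)) * ∫ ω, vecMul (urn.C n ω) spec.U j ^ 2 ∂μ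
        + (spec.lam j * ∑ i, |spec.U i j|) ^ 2 := by
      gcongr

lemma ae_tendsto_vecMul_C_div [IsProbabilityMeasure μ] {j : Fin d} (hj : j ≠ 0) :
    ∀ᵐ ω ∂μ, Tendsto (fun n : ℕ => vecMul (urn.C n ω) spec.U j / n) atTop (𝓝 0) := by
  obtain ⟨B, hB⟩ := urn.exists_integral_sq_vecMul_C_le spec hj
  exact ae_tendsto_div_natCast_of_integral_sq_le (X := fun n ω => vecMul (urn.C n ω) spec.U j)
    (urn.integrable_sq_vecMul_C spec · j) hB (fun n => urn.abs_vecMul_C_succ_sub_le spec n j)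

lemma tendsto_integral_vecMul_C_div [IsProbabilityMeasure μ] {j : Fin d} (hj : j ≠ 0) :
    Tendsto (fun n : ℕ => (∫ ω, vecMul (urn.C n ω) spec.U j ∂μ) / n) atTop (𝓝 0) := by
  have hbound : ∀ (n : ℕ) ω, ‖vecMul (urn.C n ω) spec.U j / n‖
      ≤ |vecMul urn.C0 spec.U j| + |spec.lam j| * ∑ i, |spec.U i j| := by
    intro n ω
    rcases Nat.eq_zero_or_pos n with rfl | hn
    · simp only [Nat.cast_zero, div_zero, norm_zero]
      positivity
    have hn1 : (1 : ℝ) ≤ n := by exact_mod_cast hn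
    rw [norm_div, Real.norm_eq_abs, Real.norm_natCast, div_le_iff₀ (by positivity)]
    have := urn.abs_vecMul_C_le spec n j ω
    nlinarith [abs_nonneg (vecMul urn.C0 spec.U j)]
  have hlim := tendsto_integral_of_dominated_convergence _
    (fun n => (((urn.stronglyMeasurable_vecMul_C spec.U n j).mono (F.le n)).measurable.div_const
      (n : ℝ)).aestronglyMeasurable) (integrable_const _) (fun n => ae_of_all μ (hbound n))
    (urn.ae_tendsto_vecMul_C_div spec hj)
  simpa only [integral_div, integral_zero] using hlim

lemma ae_tendsto_vecMul_C_apply [IsProbabilityMeasure μ] (j : Fin d) :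
    ∀ᵐ ω ∂μ,
      Tendsto (fun n : ℕ => (vecMul (urn.C n ω) spec.U j
          - ∫ ω', vecMul (urn.C n ω') spec.U j ∂μ) / n) atTop (𝓝 0)
      ∧ Tendsto (fun n : ℕ => vecMul (urn.C n ω) spec.U j / n) atTop
          (𝓝 (if j = 0 then spec.lam 0 else 0)) := by
  rcases eq_or_ne j 0 with rfl | hj
  · refine ae_of_all μ fun ω => ⟨?_, ?_⟩
    · simp [urn.vecMul_C_apply_zero spec]
    · rw [if_pos rfl]
      have h : Tendsto (fun n : ℕ => (∑ i, urn.C0 i) / n + spec.lam 0) atTop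
          (𝓝 (spec.lam 0)) := by
        simpa using (tendsto_const_div_atTop_nhds_zero_nat (∑ i, urn.C0 i)).add_const (spec.lam 0)
      refine h.congr' ?_
      filter_upwards [eventually_ne_atTop 0] with n hn
      rw [urn.vecMul_C_apply_zero spec]
      field_simp
  · filter_upwards [urn.ae_tendsto_vecMul_C_div spec hj] with ω hω
    rw [if_neg hj]
    refine ⟨?_, hω⟩
    simpa only [sub_div, sub_zero] using hω.sub (urn.tendsto_integral_vecMul_C_div spec hj)

end Spectral

end UrnProcess

theorem urn_centred_process_vanishes_ae_general {d : ℕ} [NeZero d]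
    {Ω : Type*} [mΩ : MeasurableSpace Ω] (μ : Measure Ω) [IsProbabilityMeasure μ]
    (F : Filtration ℕ mΩ) (R : Matrix (Fin d) (Fin d) ℝ)
    (urn : UrnProcess d μ F R) (spec : UrnSpectral d R) :
    (∀ᵐ ω ∂μ, Tendsto (fun n : ℕ => fun j : Fin d =>
          (Matrix.vecMul (urn.C n ω) spec.U j
              - ∫ ω', Matrix.vecMul (urn.C n ω') spec.U j ∂μ) / n)
        atTop (𝓝 0))
    ∧ ∀ᵐ ω ∂μ, Tendsto (fun n : ℕ => fun j : Fin d =>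
          Matrix.vecMul (urn.C n ω) spec.U j / n)
        atTop (𝓝 (fun j : Fin d => if j = 0 then spec.lam 0 else 0)) := by
  have h := ae_all_iff.2 (urn.ae_tendsto_vecMul_C_apply spec)
  constructor <;> filter_upwards [h] with ω hω <;> rw [tendsto_pi_nhds]
  · exact fun j => (hω j).1
  · exact fun j => (hω j).2

/-- **Almost sure vanishing of the centred process** (proof of Theorem 1).  With
`Y n = C n * U`, one has `n⁻¹ (Y n − E[Y n]) → 0` almost surely, and consequently
`n⁻¹ Y n → s e₁` almost surely. -/
theorem urn_centred_process_vanishes_ae {d : ℕ} [NeZero d] (hd : 2 ≤ d)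
    {Ω : Type*} [mΩ : MeasurableSpace Ω] (μ : Measure Ω) [IsProbabilityMeasure μ]
    (F : Filtration ℕ mΩ) (R : Matrix (Fin d) (Fin d) ℝ)
    (urn : UrnProcess d μ F R) (spec : UrnSpectral d R) :
    (∀ᵐ ω ∂μ, Tendsto (fun n : ℕ => fun j : Fin d =>
          (Matrix.vecMul (urn.C n ω) spec.U j
              - ∫ ω', Matrix.vecMul (urn.C n ω') spec.U j ∂μ) / n)
        atTop (𝓝 0))
    ∧ ∀ᵐ ω ∂μ, Tendsto (fun n : ℕ => fun j : Fin d =>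
          Matrix.vecMul (urn.C n ω) spec.U j / n)
        atTop (𝓝 (fun j : Fin d => if j = 0 then spec.lam 0 else 0)) :=
  urn_centred_process_vanishes_ae_general (mΩ := mΩ) μ F R urn spec
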